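/- Let X, Y ∈ ℝ^{N×N} be symmetric matrices and let A, B ∈ ℝ^{N×N} be arbitrary. Then the sum over all pairs (i,j) with 1 ≤ i ≤ N and 1 ≤ j ≤ N of tr[(E_{ji}X + XE_{ij})A] · tr[(E_{ji}Y + YE_{ij})B] equals 4·⟨X𝒮(A), Y𝒮(B)⟩_F. -/

import Mathlib

open Matrix BigOperators

/-- The `N × N` matrix with a `1` in entry `(i,j)` and `0` elsewhere. -/
def Eb (N : ℕ) (i j : Fin N) : Matrix (Fin N) (Fin N) ℝ :=
  Matrix.single i j 1

/-- The Frobenius inner product `⟨A,B⟩_F = tr(Aᵀ B)`. -/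
noncomputable def frob {N r : ℕ} (A B : Matrix (Fin N) (Fin r) ℝ) : ℝ := (Aᵀ * B).trace

/-- The symmetrization `𝒮(A) = (A + Aᵀ)/2`. -/
noncomputable def symPart {N : ℕ} (A : Matrix (Fin N) (Fin N) ℝ) : Matrix (Fin N) (Fin N) ℝ :=
  (1 / 2 : ℝ) • (A + Aᵀ)

/-! Each trace is an entry of `X (A + Aᵀ) = 2 X 𝒮(A)`, so the double sum is the entrywise
pairing `∑ᵢⱼ Mᵢⱼ Nᵢⱼ`, i.e. the Frobenius product, of `2 X 𝒮(A)` and `2 Y 𝒮(B)`. -/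

namespace Matrix

variable {n R : Type*} [Fintype n] [DecidableEq n] [CommSemiring R]

theorem trace_mul_single_mul (X A : Matrix n n R) (i j : n) :
    (X * single i j 1 * A).trace = (Xᵀ * Aᵀ) i j := by
  rw [mul_assoc, trace_mul_comm, mul_assoc, trace_single_mul, one_smul, ← transpose_mul,
    transpose_apply]

theorem trace_killingField_mul {X : Matrix n n R} (hX : Xᵀ = X) (A : Matrix n n R) (i j : n) :
    ((single j i 1 * X + X * single i j 1) * A).trace = (X * (A + Aᵀ)) i j := by
  rw [add_mul, trace_add, mul_assoc, trace_single_mul, one_smul, trace_mul_single_mul, hX,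
    mul_add, add_apply]

end Matrix

theorem frob_eq_sum {N r : ℕ} (A B : Matrix (Fin N) (Fin r) ℝ) :
    frob A B = ∑ i, ∑ j, A i j * B i j := by
  simp only [frob, trace, diag_apply, mul_apply, transpose_apply]
  exact Finset.sum_comm

theorem two_smul_symPart {N : ℕ} (A : Matrix (Fin N) (Fin N) ℝ) :
    (2 : ℝ) • symPart A = A + Aᵀ := by
  rw [symPart, smul_smul]
  norm_num

theorem stmt_14 (N : ℕ) (X Y A B : Matrix (Fin N) (Fin N) ℝ)
    (hX : Xᵀ = X) (hY : Yᵀ = Y) :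
    ∑ i : Fin N, ∑ j : Fin N,
      ((Eb N j i * X + X * Eb N i j) * A).trace *
      ((Eb N j i * Y + Y * Eb N i j) * B).trace
      = 4 * frob (X * symPart A) (Y * symPart B) := by
  simp only [Eb, trace_killingField_mul hX, trace_killingField_mul hY, ← two_smul_symPart,
    Matrix.mul_smul, Matrix.smul_apply, smul_eq_mul, frob_eq_sum, Finset.mul_sum]
  congr! 2
  ring
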